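/- Let a, b be nonzero real numbers with ab > 0 and a ≠ b, and let f(x,y) = x²/a + y²/b. Then the set of umbilic points of the elliptic paraboloid z = f(x,y), i.e. the set of (x,y) ∈ ℝ² satisfying ((1+f_y²)·f_xx − 2·f_x·f_y·f_xy + (1+f_x²)·f_yy)² = 4·(1+f_x²+f_y²)·(f_xx·f_yy − f_xy²), has exactly two elements. -/

import Mathlib

/-- Partial derivative of `f` in the first variable. -/
noncomputable def fx (f : ℝ → ℝ → ℝ) (x y : ℝ) : ℝ := deriv (fun t => f t y) x

/-- Partial derivative of `f` in the second variable. -/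
noncomputable def fy (f : ℝ → ℝ → ℝ) (x y : ℝ) : ℝ := deriv (fun t => f x t) y

/-- Second partial derivative `f_xx`. -/
noncomputable def fxx (f : ℝ → ℝ → ℝ) (x y : ℝ) : ℝ := deriv (fun t => fx f t y) x

/-- Second partial derivative `f_xy`. -/
noncomputable def fxy (f : ℝ → ℝ → ℝ) (x y : ℝ) : ℝ := deriv (fun t => fx f x t) y

/-- Second partial derivative `f_yy`. -/
noncomputable def fyy (f : ℝ → ℝ → ℝ) (x y : ℝ) : ℝ := deriv (fun t => fy f x t) y

/-- `(x,y)` is an umbilic point of the graph `z = f(x,y)`: the two principal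
curvatures coincide there. -/
def IsUmbilic (f : ℝ → ℝ → ℝ) (x y : ℝ) : Prop :=
  ((1 + fy f x y ^ 2) * fxx f x y - 2 * fx f x y * fy f x y * fxy f x y
      + (1 + fx f x y ^ 2) * fyy f x y) ^ 2
    = 4 * (1 + fx f x y ^ 2 + fy f x y ^ 2)
        * (fxx f x y * fyy f x y - fxy f x y ^ 2)

/-! When the variables separate, `z = g x + h y`, the mixed partial vanishes and, writing
`p = g'`, `q = h'`, `A = g''`, `B = h''`, the two sides of the umbilic equation differ by
`((1 + q²) A - (1 + p²) B)² + 4 A B (p q)²`. So for `A B > 0` the umbilics are the points with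
`p q = 0` and `(1 + q²) A = (1 + p²) B`. For `x²/a + y²/b` they lie on the axes, at `4 x² = a (b - a)`
or `4 y² = b (a - b)`; since `a b > 0` and `a ≠ b`, exactly one right-hand side is positive and the
other negative, which leaves two points. -/

section Separable

variable (g h : ℝ → ℝ) (x y : ℝ)

theorem fx_add : fx (fun x y => g x + h y) x y = deriv g x :=
  deriv_add_const _

theorem fy_add : fy (fun x y => g x + h y) x y = deriv h y :=
  deriv_const_add _

theorem fxx_add : fxx (fun x y => g x + h y) x y = deriv (deriv g) x := by
  simp only [fxx, fx_add]

theorem fxy_add : fxy (fun x y => g x + h y) x y = 0 := by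
  simp only [fxy, fx_add, deriv_const']

theorem fyy_add : fyy (fun x y => g x + h y) x y = deriv (deriv h) y := by
  simp only [fyy, fy_add]

end Separable

theorem sq_add_eq_four_mul_iff {p q A B : ℝ} (hAB : 0 < A * B) :
    ((1 + q ^ 2) * A + (1 + p ^ 2) * B) ^ 2 = 4 * (1 + p ^ 2 + q ^ 2) * (A * B) ↔
      p * q = 0 ∧ (1 + q ^ 2) * A = (1 + p ^ 2) * B := by
  have key : ((1 + q ^ 2) * A + (1 + p ^ 2) * B) ^ 2 - 4 * (1 + p ^ 2 + q ^ 2) * (A * B) =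
      ((1 + q ^ 2) * A - (1 + p ^ 2) * B) ^ 2 + 4 * (A * B) * (p * q) ^ 2 := by ring
  rw [← sub_eq_zero, key, add_eq_zero_iff_of_nonneg (by positivity) (by positivity),
    sq_eq_zero_iff, sub_eq_zero, mul_eq_zero_iff_left (by positivity), sq_eq_zero_iff, and_comm]

theorem isUmbilic_add_iff {g h : ℝ → ℝ} {x y : ℝ}
    (hgh : 0 < deriv (deriv g) x * deriv (deriv h) y) :
    IsUmbilic (fun x y => g x + h y) x y ↔ deriv g x * deriv h y = 0 ∧
      (1 + deriv h y ^ 2) * deriv (deriv g) x = (1 + deriv g x ^ 2) * deriv (deriv h) y := by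
  rw [← sq_add_eq_four_mul_iff hgh]
  simp only [IsUmbilic, fx_add, fy_add, fxx_add, fxy_add, fyy_add]
  ring_nf

theorem deriv_sq_div (a : ℝ) : deriv (fun x : ℝ => x ^ 2 / a) = fun x => 2 * x / a := by
  funext x
  simp [deriv_div_const, mul_comm]

theorem deriv_deriv_sq_div (a x : ℝ) : deriv (deriv fun x : ℝ => x ^ 2 / a) x = 2 / a := by
  simp [div_eq_mul_inv]

theorem setOf_sq_eq_of_pos {c : ℝ} (hc : 0 < c) : {x : ℝ | x ^ 2 = c} = {√c, -√c} := by
  ext x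
  simp [← sq_eq_sq_iff_eq_or_eq_neg, Real.sq_sqrt hc.le]

theorem ncard_setOf_sq_eq_of_pos {c : ℝ} (hc : 0 < c) : {x : ℝ | x ^ 2 = c}.ncard = 2 := by
  rw [setOf_sq_eq_of_pos hc, Set.ncard_pair]
  linarith [Real.sqrt_pos.2 hc]

theorem setOf_sq_eq_of_neg {c : ℝ} (hc : c < 0) : {x : ℝ | x ^ 2 = c} = ∅ := by
  ext x
  simp only [Set.mem_ofPred_eq, Set.mem_empty_iff_false, iff_false]
  nlinarith [sq_nonneg x]

theorem ncard_image_union_image_setOf_sq_eq {c d : ℝ} (hcd : c * d < 0) :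
    ((fun x => (x, (0 : ℝ))) '' {x : ℝ | x ^ 2 = c} ∪
      (fun y => ((0 : ℝ), y)) '' {y : ℝ | y ^ 2 = d}).ncard = 2 := by
  rcases mul_neg_iff.1 hcd with ⟨hc, hd⟩ | ⟨hc, hd⟩
  · rw [setOf_sq_eq_of_neg hd, Set.image_empty, Set.union_empty,
      Set.ncard_image_of_injective _ (Prod.mk_left_injective 0), ncard_setOf_sq_eq_of_pos hc]
  · rw [setOf_sq_eq_of_neg hc, Set.image_empty, Set.empty_union,
      Set.ncard_image_of_injective _ (Prod.mk_right_injective 0), ncard_setOf_sq_eq_of_pos hd]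

theorem setOf_isUmbilic_paraboloid {a b : ℝ} (hab : 0 < a * b) :
    {q : ℝ × ℝ | IsUmbilic (fun x y => x ^ 2 / a + y ^ 2 / b) q.1 q.2} =
      (fun x => (x, 0)) '' {x | x ^ 2 = a * (b - a) / 4} ∪
        (fun y => (0, y)) '' {y | y ^ 2 = b * (a - b) / 4} := by
  have ha : a ≠ 0 := left_ne_zero_of_mul hab.ne'
  have hb : b ≠ 0 := right_ne_zero_of_mul hab.ne'
  ext ⟨x, y⟩
  rw [Set.mem_ofPred_eq, isUmbilic_add_iff]
  · simp only [deriv_deriv_sq_div, Set.mem_union, Set.mem_image, Set.mem_ofPred_eq, Prod.mk.injEq]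
    simp only [deriv_sq_div]
    constructor
    · rintro ⟨hxy, hcurv⟩
      rcases mul_eq_zero.1 hxy with hx | hy
      · obtain rfl : x = 0 := by simpa [ha] using hx
        refine Or.inr ⟨y, mul_left_cancel₀ ha ?_, rfl, rfl⟩
        field_simp at hcurv
        linear_combination hcurv / 4
      · obtain rfl : y = 0 := by simpa [hb] using hy
        refine Or.inl ⟨x, mul_left_cancel₀ hb ?_, rfl, rfl⟩
        field_simp at hcurv
        linear_combination -hcurv / 4
    · rintro (⟨x, hx, rfl, rfl⟩ | ⟨y, hy, rfl, rfl⟩)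
      · refine ⟨by simp, ?_⟩
        field_simp
        linear_combination -4 * b * hx
      · refine ⟨by simp, ?_⟩
        field_simp
        linear_combination 4 * a * hy
  · rw [deriv_deriv_sq_div, deriv_deriv_sq_div, div_mul_div_comm]
    exact div_pos (by norm_num) hab

theorem elliptic_paraboloid_two_umbilics_general (a b : ℝ)
    (hab : 0 < a * b) (hne : a ≠ b) :
    {q : ℝ × ℝ | IsUmbilic (fun x y => x ^ 2 / a + y ^ 2 / b) q.1 q.2}.ncard = 2 := by
  rw [setOf_isUmbilic_paraboloid hab]
  apply ncard_image_union_image_setOf_sq_eq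
  have hsq : 0 < (a - b) ^ 2 := by
    have := sub_ne_zero.2 hne
    positivity
  calc a * (b - a) / 4 * (b * (a - b) / 4) = -(a * b * (a - b) ^ 2) / 16 := by ring
    _ < 0 := by linarith [mul_pos hab hsq]

/-- The elliptic paraboloid `z = x²/a + y²/b` with `ab > 0`, `a ≠ b` has exactly
two umbilic points. -/
theorem elliptic_paraboloid_two_umbilics (a b : ℝ) (ha : a ≠ 0) (hb : b ≠ 0)
    (hab : 0 < a * b) (hne : a ≠ b) :
    {q : ℝ × ℝ | IsUmbilic (fun x y => x ^ 2 / a + y ^ 2 / b) q.1 q.2}.ncard = 2 :=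
  elliptic_paraboloid_two_umbilics_general a b hab hne
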